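/- The rational map f: P² ⇢ P² given by [x:y:z] ↦ [x²y + y²z + z²(x+y) : y²(x−z) : xyz + z²(x+y)] over the complex numbers is surjective: every point of P² has a preimage outside the indeterminacy locus. -/

import Mathlib

/-!
The lines `z = q x` pass through the base point `[0:1:0]`, and on such a line the three cubics
share the factor `x`. Moreover `g0 - g2` and `g1` share the factor `y` there, so the ratio
`(g0 - g2) : g1` is a Möbius function of `[x:y]`; matching it with `(a - c) : b` fixes the point
`[x:y:z] = [(a - c)(1 - q) - b q : b (1 - q) : q ((a - c)(1 - q) - b q)]`, and the one remaining
condition `c g1 = b g2` is a quartic equation in `q`, solvable over `ℂ`. The targets with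
`b = 0` or `c = 0`, where this breaks down, are hit by explicit points.
-/

/-- The three cubic components of the map
`[x:y:z] ↦ [x²y + y²z + z²(x+y) : y²(x−z) : xyz + z²(x+y)]`. -/
noncomputable def g0 (x y z : ℂ) : ℂ := x^2*y + y^2*z + z^2*(x + y)
noncomputable def g1 (x y z : ℂ) : ℂ := y^2*(x - z)
noncomputable def g2 (x y z : ℂ) : ℂ := x*y*z + z^2*(x + y)

open Polynomial in
theorem exists_quartic_eq_zero {K : Type*} [Field K] [IsAlgClosed K] {p0 p1 p2 p3 p4 : K}
    (h : p1 ≠ 0 ∨ p2 ≠ 0 ∨ p3 ≠ 0 ∨ p4 ≠ 0) :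
    ∃ q, p4 * q ^ 4 + p3 * q ^ 3 + p2 * q ^ 2 + p1 * q + p0 = 0 := by
  set p : K[X] := C p4 * X ^ 4 + C p3 * X ^ 3 + C p2 * X ^ 2 + C p1 * X + C p0
  have hp : p.degree ≠ 0 := by
    intro hdeg
    have hcoeff (n : ℕ) (hn : n ≠ 0) : p.coeff n = 0 :=
      coeff_eq_zero_of_degree_lt (by rw [hdeg]; exact_mod_cast Nat.pos_of_ne_zero hn)
    have h1 := hcoeff 1 one_ne_zero
    have h2 := hcoeff 2 two_ne_zero
    have h3 := hcoeff 3 three_ne_zero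
    have h4 := hcoeff 4 four_ne_zero
    simp [p, coeff_X_pow, coeff_C] at h1 h2 h3 h4
    tauto
  obtain ⟨q, hq⟩ := IsAlgClosed.exists_root p hp
  exact ⟨q, by simpa [p] using hq⟩

def HasPreimage (a b c : ℂ) : Prop :=
  ∃ x y z : ℂ, ∃ t : ℂ, t ≠ 0 ∧ g0 x y z = t * a ∧ g1 x y z = t * b ∧ g2 x y z = t * c

-- On the line `x = z` the map is `x • [(x + y)² : 0 : x (x + 2y)]`, which for `x = u + w`,
-- `y = -w` is `(u + w) • [u² : 0 : u² - w²]`.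
theorem hasPreimage_a_zero_c {a c : ℂ} (h : a ≠ 0 ∨ c ≠ 0) : HasPreimage a 0 c := by
  obtain ⟨u, hu⟩ := IsAlgClosed.exists_pow_nat_eq a two_pos
  obtain ⟨w, hw, huw⟩ : ∃ w : ℂ, w ^ 2 = a - c ∧ u + w ≠ 0 := by
    obtain ⟨w, hw⟩ := IsAlgClosed.exists_pow_nat_eq (a - c) two_pos
    by_cases huw : u + w = 0
    · refine ⟨-w, by rw [neg_sq, hw], fun huw' => ?_⟩
      have hu0 : u = 0 := by linear_combination (huw + huw') / 2
      have hw0 : w = 0 := by linear_combination huw - hu0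
      subst hu0 hw0
      obtain rfl : a = 0 := by linear_combination -hu
      obtain rfl : c = 0 := by linear_combination hw
      simp at h
    · exact ⟨w, hw, huw⟩
  refine ⟨u + w, -w, u + w, u + w, huw, ?_, by simp [g1], ?_⟩
  · unfold g0; linear_combination (u + w) * hu
  · unfold g2; linear_combination (u + w) * (hu - hw)

theorem hasPreimage_a_b_zero {a b : ℂ} (hb : b ≠ 0) : HasPreimage a b 0 := by
  by_cases ha : a = 0
  · subst ha
    -- `[√2 : √2 - 2 : 1]` lies on the conic `g2 = 0` and on the cubic `g0 = 0`.
    obtain ⟨r, hr⟩ := IsAlgClosed.exists_pow_nat_eq (2 : ℂ) two_pos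
    have hr1 : r - 1 ≠ 0 := fun h => by
      obtain rfl : r = 1 := by linear_combination h
      norm_num at hr
    have hr2 : r - 2 ≠ 0 := fun h => by
      obtain rfl : r = 2 := by linear_combination h
      norm_num at hr
    refine ⟨r, r - 2, 1, (r - 2) ^ 2 * (r - 1) / b, by simp [hb, hr1, hr2], ?_, ?_, ?_⟩
    · unfold g0; linear_combination (r - 1) * hr
    · unfold g1; field_simp
    · unfold g2; linear_combination hr
  · exact ⟨a, b, 0, a * b, mul_ne_zero ha hb, by unfold g0; ring, by unfold g1; ring,
      by unfold g2; ring⟩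

theorem hasPreimage_of_b_ne_zero_of_c_ne_zero {a b c : ℂ} (hb : b ≠ 0) (hc : c ≠ 0) :
    HasPreimage a b c := by
  -- The quartic is `(c g1 - b g2) / (b x)` at `[x : b (1 - q) : q x]`, `x = (a - c)(1 - q) - b q`.
  obtain ⟨q, hq⟩ : ∃ q : ℂ, b * c * (1 - q) ^ 3 - q * ((a - c) * (1 - q) - b * q) *
      (b * (1 - q ^ 2) + q * ((a - c) * (1 - q) - b * q)) = 0 := by
    have hnonconst : -(b * (a + 2 * c)) ≠ 0 ∨ -(a - c) ^ 2 + (a - c) * b + b ^ 2 + 3 * b * c ≠ 0 ∨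
        2 * (a - c) ^ 2 + 3 * (a - c) * b - b * c ≠ 0 ∨ -((a - c + b) * (a - c + 2 * b)) ≠ 0 := by
      by_contra! h
      obtain ⟨h1, h2, h3, -⟩ := h
      obtain rfl : a = -2 * c := by
        linear_combination (mul_eq_zero.mp (neg_eq_zero.mp h1)).resolve_left hb
      have h5 : 5 * b = 9 * c := by
        have : c * (9 * c - 5 * b) = 0 := by linear_combination h3 / 2
        linear_combination -(mul_eq_zero.mp this).resolve_left hc
      have : c ^ 2 = 0 := by linear_combination (-25 * h2 + (5 * b + 9 * c) * h5) / 144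
      exact hc (pow_eq_zero_iff two_ne_zero |>.mp this)
    obtain ⟨q, hq⟩ := exists_quartic_eq_zero (p0 := b * c) hnonconst
    exact ⟨q, by linear_combination hq⟩
  set x := (a - c) * (1 - q) - b * q
  have hq1 : 1 - q ≠ 0 := fun h => by
    obtain rfl : q = 1 := by linear_combination -h
    exact hb (pow_eq_zero_iff two_ne_zero |>.mp (by linear_combination -hq))
  have hx0 : x ≠ 0 := fun h => by
    rw [h] at hq
    exact mul_ne_zero (mul_ne_zero hb hc) (pow_ne_zero 3 hq1) (by linear_combination hq)
  refine ⟨x, b * (1 - q), q * x, b * (1 - q) ^ 3 * x, by simp [hb, hq1, hx0], ?_, ?_, ?_⟩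
  · unfold g0; linear_combination -x * hq
  · unfold g1; ring
  · unfold g2; linear_combination -x * hq

/-- The cubic rational map `f = [g0 : g1 : g2] : ℙ² ⇢ ℙ²` is surjective:
every point of `ℙ²` has a preimage outside the indeterminacy locus. -/
theorem cubic_map_surjective_cubic_case :
    ∀ a b c : ℂ, (a, b, c) ≠ (0, 0, 0) →
      ∃ x y z : ℂ, ∃ t : ℂ, t ≠ 0 ∧
        g0 x y z = t * a ∧ g1 x y z = t * b ∧ g2 x y z = t * c := by
  intro a b c habc
  by_cases hb : b = 0
  · subst hb
    exact hasPreimage_a_zero_c (by by_contra! h; simp [h.1, h.2] at habc)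
  by_cases hc : c = 0
  · subst hc
    exact hasPreimage_a_b_zero hb
  exact hasPreimage_of_b_ne_zero_of_c_ne_zero hb hc
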